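/- (Lemma 1, generalized stacking) Fix d ≥ 1 and an onsite symmetry (G, u), and let Ω be a flow (satisfying flow properties (1)–(4)). Let Λ be a finite type of sites, let Λ₁, Λ₂ ⊆ Λ be disjoint subsets, let U₁, U₂ be G-symmetric unitaries on Λ supported on Λ₁ and Λ₂ respectively, and let A₁, B₁ ⊆ Λ₁ and A₂, B₂ ⊆ Λ₂. Then Ω^Λ_{A₁∪A₂, B₁∪B₂}(U₁·U₂) = Ω^Λ_{A₁,B₁}(U₁) + Ω^Λ_{A₂,B₂}(U₂). -/

import Mathlib

open Matrix

/-- A matrix on the many-body space `ι = Λ → Fin d` is supported on `S ⊆ Λ` if its entries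
vanish whenever the two configurations differ at a site outside `S`, and otherwise depend
only on the restrictions of the configurations to `S`. -/
def SupportedOn {Λ : Type*} {d : ℕ} (S : Set Λ)
    (M : Matrix (Λ → Fin d) (Λ → Fin d) ℂ) : Prop :=
  (∀ x y, (∃ r ∉ S, x r ≠ y r) → M x y = 0) ∧
  (∀ x y x' y', (∀ r ∈ S, x r = x' r) → (∀ r ∈ S, y r = y' r) →
    (∀ r ∉ S, x r = y r) → (∀ r ∉ S, x' r = y' r) → M x y = M x' y')

/-- A matrix is unitary if `Mᴴ M = 1 = M Mᴴ`. -/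
def IsUnitaryMat {ι : Type*} [Fintype ι] [DecidableEq ι] (M : Matrix ι ι ℂ) : Prop :=
  Mᴴ * M = 1 ∧ M * Mᴴ = 1

/-- The global onsite symmetry operator `U_g`, with entries `∏_r u(g)_{x(r),y(r)}`. -/
def symOp {Λ : Type*} [Fintype Λ] {d : ℕ} {G : Type*}
    (u : G → Matrix (Fin d) (Fin d) ℂ) (g : G) :
    Matrix (Λ → Fin d) (Λ → Fin d) ℂ :=
  Matrix.of fun x y => ∏ r, u g (x r) (y r)

/-- A matrix is `G`-symmetric if it commutes with every global symmetry operator. -/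
def IsGSymm {Λ : Type*} [Fintype Λ] [DecidableEq Λ] {d : ℕ} {G : Type*}
    (u : G → Matrix (Fin d) (Fin d) ℂ)
    (M : Matrix (Λ → Fin d) (Λ → Fin d) ℂ) : Prop :=
  ∀ g, M * symOp u g = symOp u g * M

/-- The `ℓ`-thickened boundary `∂_ℓ S = {r : dist(r,S) ≤ ℓ and dist(r,Λ∖S) ≤ ℓ}`. -/
def thickBd {Λ : Type*} [MetricSpace Λ] (ℓ : ℝ) (S : Set Λ) : Set Λ :=
  {r | (∃ s ∈ S, dist r s ≤ ℓ) ∧ (∃ s ∈ Sᶜ, dist r s ≤ ℓ)}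

/-- A strict locality-preserving unitary with operator spreading length `ξ`: conjugation
maps any operator supported on a single site `r` to one supported in the closed ball of
radius `ξ` around `r`. -/
def IsStrictLPU {Λ : Type*} [Fintype Λ] [DecidableEq Λ] [MetricSpace Λ] {d : ℕ}
    (ξ : ℝ) (U : Matrix (Λ → Fin d) (Λ → Fin d) ℂ) : Prop :=
  IsUnitaryMat U ∧ ∀ (r : Λ) (O : Matrix (Λ → Fin d) (Λ → Fin d) ℂ),
    SupportedOn {r} O → SupportedOn (Metric.closedBall r ξ) (Uᴴ * O * U)

/-- A flow: an assignment, to every finite lattice `Λ'`, subsets `A, B ⊆ Λ'` and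
`G`-symmetric unitary `U` on `Λ' → Fin d`, of a real number `Ω^{Λ'}_{A,B}(U)`, satisfying
the four defining properties of Definition 1. -/
structure LatticeFlow (d : ℕ) (G : Type) [Group G] (u : G → Matrix (Fin d) (Fin d) ℂ) where
  omega : (Λ' : Type) → [Fintype Λ'] → [DecidableEq Λ'] → Set Λ' → Set Λ' →
    Matrix (Λ' → Fin d) (Λ' → Fin d) ℂ → ℝ
  /-- (1): invariance under left multiplication by `G`-symmetric unitaries supported on
  `A` or on its complement. -/
  left_inv : ∀ (Λ' : Type) [Fintype Λ'] [DecidableEq Λ'] (A B : Set Λ')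
    (U V : Matrix (Λ' → Fin d) (Λ' → Fin d) ℂ),
    IsUnitaryMat U → IsGSymm u U → IsUnitaryMat V → IsGSymm u V →
    (SupportedOn A V ∨ SupportedOn Aᶜ V) →
    omega Λ' A B (V * U) = omega Λ' A B U
  /-- (2): invariance under right multiplication by `G`-symmetric unitaries supported on
  `B` or on its complement. -/
  right_inv : ∀ (Λ' : Type) [Fintype Λ'] [DecidableEq Λ'] (A B : Set Λ')
    (U V : Matrix (Λ' → Fin d) (Λ' → Fin d) ℂ),
    IsUnitaryMat U → IsGSymm u U → IsUnitaryMat V → IsGSymm u V →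
    (SupportedOn B V ∨ SupportedOn Bᶜ V) →
    omega Λ' A B (U * V) = omega Λ' A B U
  /-- (3): additivity under stacking (disjoint-union lattices and Kronecker products). -/
  stacking : ∀ (Λ₁ Λ₂ : Type) [Fintype Λ₁] [DecidableEq Λ₁] [Fintype Λ₂] [DecidableEq Λ₂]
    (A₁ B₁ : Set Λ₁) (A₂ B₂ : Set Λ₂)
    (U₁ : Matrix (Λ₁ → Fin d) (Λ₁ → Fin d) ℂ) (U₂ : Matrix (Λ₂ → Fin d) (Λ₂ → Fin d) ℂ),
    IsUnitaryMat U₁ → IsGSymm u U₁ → IsUnitaryMat U₂ → IsGSymm u U₂ →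
    omega (Λ₁ ⊕ Λ₂) (Sum.inl '' A₁ ∪ Sum.inr '' A₂) (Sum.inl '' B₁ ∪ Sum.inr '' B₂)
      (Matrix.reindex (Equiv.sumArrowEquivProdArrow Λ₁ Λ₂ (Fin d)).symm
        (Equiv.sumArrowEquivProdArrow Λ₁ Λ₂ (Fin d)).symm
        (Matrix.kroneckerMap (· * ·) U₁ U₂)) =
      omega Λ₁ A₁ B₁ U₁ + omega Λ₂ A₂ B₂ U₂
  /-- (4): normalization `Ω_{A,B}(𝟙) = 0`. -/
  norm_one : ∀ (Λ' : Type) [Fintype Λ'] [DecidableEq Λ'] (A B : Set Λ'),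
    omega Λ' A B 1 = 0


/-!
Put a second copy of `Λ` next to `Λ`, carrying the identity: by (3) and (4) this does not change
the flow, whatever cuts are chosen on the second copy. Exchanging the two copies of a site that
lies on the same side of both cuts is a `G`-symmetric unitary supported on `A` or `Aᶜ` and on `B`
or `Bᶜ`, so by (1) and (2) conjugating by it does not change the flow either. Such exchanges move
an operator supported on `S` to the second copy, and (3) then splits the flow. Choosing the cuts on
the second copy equal to those on the first gives additivity `Ω_{A,B}(U₁U₂) = Ω_{A,B}(U₁) +
Ω_{A,B}(U₂)` for disjointly supported `U₁, U₂`; choosing `A ∩ S, B ∩ S` gives locality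
`Ω_{A,B}(U) = Ω_{A∩S,B∩S}(U)` for `U` supported on `S`. The theorem combines the two.
-/

section Unitary

variable {ι : Type*} [Fintype ι] [DecidableEq ι]

lemma isUnitaryMat_one : IsUnitaryMat (1 : Matrix ι ι ℂ) := by
  constructor <;> simp

lemma IsUnitaryMat.mul {M N : Matrix ι ι ℂ} (hM : IsUnitaryMat M) (hN : IsUnitaryMat N) :
    IsUnitaryMat (M * N) := by
  constructor
  · rw [conjTranspose_mul, Matrix.mul_assoc, ← Matrix.mul_assoc Mᴴ, hM.1, Matrix.one_mul, hN.1]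
  · rw [conjTranspose_mul, Matrix.mul_assoc, ← Matrix.mul_assoc N, hN.2, Matrix.one_mul, hM.2]

lemma IsUnitaryMat.conjTranspose {M : Matrix ι ι ℂ} (hM : IsUnitaryMat M) :
    IsUnitaryMat Mᴴ := by
  rw [IsUnitaryMat, conjTranspose_conjTranspose]
  exact hM.symm

lemma IsUnitaryMat.submatrix {M : Matrix ι ι ℂ} (hM : IsUnitaryMat M) (e : ι ≃ ι) :
    IsUnitaryMat (M.submatrix e e) := by
  constructor
  · rw [conjTranspose_submatrix, submatrix_mul_equiv, hM.1, submatrix_one_equiv]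
  · rw [conjTranspose_submatrix, submatrix_mul_equiv, hM.2, submatrix_one_equiv]

lemma isUnitaryMat_permMatrix (σ : Equiv.Perm ι) : IsUnitaryMat (σ.permMatrix ℂ) := by
  constructor
  · rw [conjTranspose_permMatrix, ← permMatrix_mul, mul_inv_cancel, permMatrix_one]
  · rw [conjTranspose_permMatrix, ← permMatrix_mul, inv_mul_cancel, permMatrix_one]

lemma permMatrix_mul_mul_conjTranspose (σ : Equiv.Perm ι) (M : Matrix ι ι ℂ) :
    σ.permMatrix ℂ * M * (σ.permMatrix ℂ)ᴴ = M.submatrix σ σ := by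
  rw [conjTranspose_permMatrix, PEquiv.toMatrix_toPEquiv_mul, Equiv.Perm.permMatrix,
    Equiv.Perm.inv_def, PEquiv.mul_toMatrix_toPEquiv, submatrix_submatrix]
  simp

end Unitary

section Symmetric

variable {Λ : Type*} [Fintype Λ] [DecidableEq Λ] {d : ℕ} {G : Type*}
  {u : G → Matrix (Fin d) (Fin d) ℂ}

lemma isGSymm_one : IsGSymm u (1 : Matrix (Λ → Fin d) (Λ → Fin d) ℂ) := fun g => by
  rw [Matrix.one_mul, Matrix.mul_one]

lemma IsGSymm.mul {M N : Matrix (Λ → Fin d) (Λ → Fin d) ℂ}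
    (hM : IsGSymm u M) (hN : IsGSymm u N) : IsGSymm u (M * N) := fun g => by
  rw [Matrix.mul_assoc, hN g, ← Matrix.mul_assoc, hM g, Matrix.mul_assoc]

lemma IsGSymm.conjTranspose {M : Matrix (Λ → Fin d) (Λ → Fin d) ℂ}
    (hMu : IsUnitaryMat M) (hM : IsGSymm u M) : IsGSymm u Mᴴ := fun g => by
  calc Mᴴ * symOp u g = Mᴴ * symOp u g * (M * Mᴴ) := by rw [hMu.2, Matrix.mul_one]
    _ = Mᴴ * (M * symOp u g) * Mᴴ := by rw [hM g]; simp only [Matrix.mul_assoc]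
    _ = symOp u g * Mᴴ := by rw [← Matrix.mul_assoc, hMu.1, Matrix.one_mul]

end Symmetric

section Support

variable {Λ : Type*} {d : ℕ}

lemma SupportedOn.conjTranspose {S : Set Λ} {M : Matrix (Λ → Fin d) (Λ → Fin d) ℂ}
    (hM : SupportedOn S M) : SupportedOn S Mᴴ := by
  refine ⟨fun x y ⟨r, hr, hxy⟩ => ?_, fun x y x' y' hx hy hxy hxy' => ?_⟩
  · simp [hM.1 y x ⟨r, hr, Ne.symm hxy⟩]
  · simp only [conjTranspose_apply]
    rw [hM.2 y x y' x' hy hx (fun r hr => (hxy r hr).symm) (fun r hr => (hxy' r hr).symm)]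

open scoped Classical in
lemma SupportedOn.apply_eq_ite {S : Set Λ} {M : Matrix (Λ → Fin d) (Λ → Fin d) ℂ}
    (hM : SupportedOn S M) (c x y : Λ → Fin d) :
    M x y = if ∀ r ∉ S, x r = y r then
      M (fun r => if r ∈ S then x r else c r) (fun r => if r ∈ S then y r else c r) else 0 := by
  split_ifs with hxy
  · exact hM.2 _ _ _ _ (fun r hr => by simp [hr]) (fun r hr => by simp [hr]) hxy
      fun r hr => by simp [hr]
  · exact hM.1 x y (by simpa using hxy)

end Support

section ConfigPerm

variable {Λ : Type*} {d : ℕ} {G : Type*} {u : G → Matrix (Fin d) (Fin d) ℂ}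

def configPerm (d : ℕ) (π : Equiv.Perm Λ) : Equiv.Perm (Λ → Fin d) :=
  π.arrowCongr (Equiv.refl (Fin d))

@[simp] lemma configPerm_apply (π : Equiv.Perm Λ) (x : Λ → Fin d) (r : Λ) :
    configPerm d π x r = x (π.symm r) := rfl

lemma configPerm_mul (π σ : Equiv.Perm Λ) :
    configPerm d (π * σ) = configPerm d π * configPerm d σ := rfl

variable [Fintype Λ]

lemma symOp_submatrix_configPerm (π : Equiv.Perm Λ) (g : G) :
    (symOp u g).submatrix (configPerm d π) (configPerm d π) = symOp u g := by
  ext x y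
  simp only [symOp, submatrix_apply, of_apply, configPerm_apply]
  exact Fintype.prod_equiv π.symm _ _ fun r => rfl

lemma supportedOn_permMatrix_configPerm {π : Equiv.Perm Λ} {T : Set Λ}
    (hπ : ∀ r ∉ T, π r = r) : SupportedOn T ((configPerm d π).permMatrix ℂ) := by
  have hπ' : ∀ r ∉ T, π.symm r = r := fun r hr => π.symm_apply_eq.2 (hπ r hr).symm
  have hπT : ∀ r ∈ T, π.symm r ∈ T := fun r hr => by
    by_contra h
    rw [← π.apply_symm_apply r, hπ _ h] at hr
    exact h hr
  have key : ∀ x y : Λ → Fin d, (∀ r ∉ T, x r = y r) →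
      (y = configPerm d π x ↔ ∀ r ∈ T, y r = x (π.symm r)) := fun x y hxy => by
    refine ⟨fun h r _ => congrFun h r, fun h => funext fun r => ?_⟩
    by_cases hr : r ∈ T
    · exact h r hr
    · simp [hπ' r hr, hxy r hr]
  have hentry : ∀ x y,
      (configPerm d π).permMatrix ℂ x y = if y = configPerm d π x then 1 else 0 :=
    fun x y => by simp [Equiv.Perm.permMatrix, eq_comm]
  refine ⟨fun x y ⟨r, hr, hxy⟩ => ?_, fun x y x' y' hx hy hxy hxy' => ?_⟩
  · rw [hentry, if_neg fun h => hxy ?_]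
    rw [h, configPerm_apply, hπ' r hr]
  · rw [hentry, hentry]
    refine if_congr ?_ rfl rfl
    rw [key x y hxy, key x' y' hxy']
    exact forall₂_congr fun r hr => by rw [hx _ (hπT r hr), hy r hr]

variable [DecidableEq Λ]

lemma supportedOn_or_compl_permMatrix_configPerm_swap {a b : Λ} (C : Set Λ)
    (hC : a ∈ C ↔ b ∈ C) :
    SupportedOn C ((configPerm d (Equiv.swap a b)).permMatrix ℂ) ∨
      SupportedOn Cᶜ ((configPerm d (Equiv.swap a b)).permMatrix ℂ) := by
  by_cases ha : a ∈ C
  · exact .inl <| supportedOn_permMatrix_configPerm fun r hr =>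
      Equiv.swap_apply_of_ne_of_ne (by rintro rfl; exact hr ha) (by rintro rfl; exact hr (hC.1 ha))
  · exact .inr <| supportedOn_permMatrix_configPerm fun r hr =>
      Equiv.swap_apply_of_ne_of_ne (by rintro rfl; exact hr ha)
        (by rintro rfl; exact hr (mt hC.2 ha))

lemma IsGSymm.submatrix_configPerm {M : Matrix (Λ → Fin d) (Λ → Fin d) ℂ}
    (hM : IsGSymm u M) (π : Equiv.Perm Λ) :
    IsGSymm u (M.submatrix (configPerm d π) (configPerm d π)) := fun g => by
  rw [← symOp_submatrix_configPerm π g, submatrix_mul_equiv, submatrix_mul_equiv, hM g]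

lemma isGSymm_permMatrix_configPerm (π : Equiv.Perm Λ) :
    IsGSymm u ((configPerm d π).permMatrix ℂ) := fun g => by
  rw [PEquiv.toMatrix_toPEquiv_mul, PEquiv.mul_toMatrix_toPEquiv]
  conv_rhs => rw [← symOp_submatrix_configPerm π g, submatrix_submatrix]
  simp

end ConfigPerm

section Stack

variable {Λ₁ Λ₂ : Type*} {d : ℕ}

def stack (X : Matrix (Λ₁ → Fin d) (Λ₁ → Fin d) ℂ) (Y : Matrix (Λ₂ → Fin d) (Λ₂ → Fin d) ℂ) :
    Matrix ((Λ₁ ⊕ Λ₂) → Fin d) ((Λ₁ ⊕ Λ₂) → Fin d) ℂ :=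
  Matrix.reindex (Equiv.sumArrowEquivProdArrow Λ₁ Λ₂ (Fin d)).symm
    (Equiv.sumArrowEquivProdArrow Λ₁ Λ₂ (Fin d)).symm (Matrix.kroneckerMap (· * ·) X Y)

lemma stack_apply (X : Matrix (Λ₁ → Fin d) (Λ₁ → Fin d) ℂ)
    (Y : Matrix (Λ₂ → Fin d) (Λ₂ → Fin d) ℂ) (x y : (Λ₁ ⊕ Λ₂) → Fin d) :
    stack X Y x y = X (fun r => x (.inl r)) (fun r => y (.inl r)) *
      Y (fun r => x (.inr r)) (fun r => y (.inr r)) := rfl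

lemma conjTranspose_stack (X : Matrix (Λ₁ → Fin d) (Λ₁ → Fin d) ℂ)
    (Y : Matrix (Λ₂ → Fin d) (Λ₂ → Fin d) ℂ) : (stack X Y)ᴴ = stack Xᴴ Yᴴ := by
  ext x y
  simp only [conjTranspose_apply, stack_apply, star_mul']

variable [Fintype Λ₁] [Fintype Λ₂] {G : Type*} {u : G → Matrix (Fin d) (Fin d) ℂ}

lemma stack_one_one : stack (1 : Matrix (Λ₁ → Fin d) (Λ₁ → Fin d) ℂ)
    (1 : Matrix (Λ₂ → Fin d) (Λ₂ → Fin d) ℂ) = 1 := by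
  rw [stack, one_kronecker_one, reindex_apply, submatrix_one_equiv]

lemma symOp_sum_eq_stack (g : G) :
    (symOp u g : Matrix ((Λ₁ ⊕ Λ₂) → Fin d) ((Λ₁ ⊕ Λ₂) → Fin d) ℂ) =
      stack (symOp u g) (symOp u g) := by
  ext x y
  exact Fintype.prod_sum_type fun s => u g (x s) (y s)

variable [DecidableEq Λ₁] [DecidableEq Λ₂]

lemma stack_mul_stack (X X' : Matrix (Λ₁ → Fin d) (Λ₁ → Fin d) ℂ)
    (Y Y' : Matrix (Λ₂ → Fin d) (Λ₂ → Fin d) ℂ) :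
    stack X Y * stack X' Y' = stack (X * X') (Y * Y') := by
  rw [stack, stack, stack, reindex_apply, reindex_apply, reindex_apply, submatrix_mul_equiv,
    ← mul_kronecker_mul]

lemma IsUnitaryMat.stack {X : Matrix (Λ₁ → Fin d) (Λ₁ → Fin d) ℂ}
    {Y : Matrix (Λ₂ → Fin d) (Λ₂ → Fin d) ℂ} (hX : IsUnitaryMat X) (hY : IsUnitaryMat Y) :
    IsUnitaryMat (stack X Y) := by
  constructor
  · rw [conjTranspose_stack, stack_mul_stack, hX.1, hY.1, stack_one_one]
  · rw [conjTranspose_stack, stack_mul_stack, hX.2, hY.2, stack_one_one]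

lemma IsGSymm.stack {X : Matrix (Λ₁ → Fin d) (Λ₁ → Fin d) ℂ}
    {Y : Matrix (Λ₂ → Fin d) (Λ₂ → Fin d) ℂ} (hX : IsGSymm u X) (hY : IsGSymm u Y) :
    IsGSymm u (stack X Y) := fun g => by
  rw [symOp_sum_eq_stack, stack_mul_stack, stack_mul_stack, hX g, hY g]

end Stack

section SwapCopies

open scoped Classical in
noncomputable def swapCopies {Λ : Type*} (R : Set Λ) : Equiv.Perm (Λ ⊕ Λ) :=
  Function.Involutive.toPerm
    (Sum.elim (fun r => if r ∈ R then .inr r else .inl r)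
      (fun r => if r ∈ R then .inl r else .inr r))
    (by rintro (r | r) <;> by_cases h : r ∈ R <;> simp [h])

variable {Λ : Type*}

open scoped Classical in
@[simp] lemma swapCopies_inl (R : Set Λ) (r : Λ) :
    swapCopies R (.inl r) = if r ∈ R then .inr r else .inl r := rfl

open scoped Classical in
@[simp] lemma swapCopies_inr (R : Set Λ) (r : Λ) :
    swapCopies R (.inr r) = if r ∈ R then .inl r else .inr r := rfl

@[simp] lemma swapCopies_symm (R : Set Λ) : (swapCopies R).symm = swapCopies R := rfl

lemma swapCopies_empty : swapCopies (∅ : Set Λ) = 1 := by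
  ext (r | r) <;> simp

lemma swapCopies_insert [DecidableEq Λ] {a : Λ} {R : Set Λ} (ha : a ∉ R) :
    swapCopies (insert a R) = Equiv.swap (.inl a) (.inr a) * swapCopies R := by
  ext (r | r) <;> by_cases hr : r ∈ R <;> by_cases hra : r = a <;>
    simp_all [Equiv.swap_apply_def]

variable [Fintype Λ] {d : ℕ}

-- Both sides are put in the normal form of `SupportedOn.apply_eq_ite`; only the conditions
-- under which the entries vanish remain to be compared.
open scoped Classical in
lemma stack_one_submatrix_swapCopies_of_supportedOn {R : Set Λ}
    {Y : Matrix (Λ → Fin d) (Λ → Fin d) ℂ} (hY : SupportedOn R Y) :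
    (stack Y 1).submatrix (configPerm d (swapCopies R)) (configPerm d (swapCopies R)) =
      stack 1 Y := by
  ext x y
  simp only [submatrix_apply, stack_apply, configPerm_apply, swapCopies_symm, swapCopies_inl,
    swapCopies_inr, one_apply, apply_ite x, apply_ite y]
  conv_rhs => rw [hY.apply_eq_ite (fun r => x (.inl r))]
  conv_lhs => rw [hY.apply_eq_ite (fun r => x (.inl r))]
  simp +contextual only [ite_true, ite_false, funext_iff]
  simp only [ite_zero_mul_ite_zero, mul_one, one_mul]
  refine if_congr ⟨fun ⟨hl, hs⟩ => ⟨fun r => ?_, fun r hrR => ?_⟩,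
    fun ⟨hl, hr⟩ => ⟨fun r _ => hl r, fun r => ?_⟩⟩ rfl rfl
  · by_cases hrR : r ∈ R
    · simpa [hrR] using hs r
    · exact hl r hrR
  · simpa [hrR] using hs r
  · split_ifs with hrR
    exacts [hl r, hr r hrR]

open scoped Classical in
lemma stack_one_submatrix_swapCopies_of_disjoint {P R : Set Λ}
    {X : Matrix (Λ → Fin d) (Λ → Fin d) ℂ} (hX : SupportedOn P X) (hPR : Disjoint P R) :
    (stack X 1).submatrix (configPerm d (swapCopies R)) (configPerm d (swapCopies R)) =
      stack X 1 := by
  have hRP : ∀ r ∈ R, r ∉ P := fun r hr hp => Set.disjoint_left.1 hPR hp hr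
  ext x y
  simp only [submatrix_apply, stack_apply, configPerm_apply, swapCopies_symm, swapCopies_inl,
    swapCopies_inr, one_apply, apply_ite x, apply_ite y]
  conv_rhs => rw [hX.apply_eq_ite (fun r => x (.inl r))]
  conv_lhs => rw [hX.apply_eq_ite (fun r => x (.inl r))]
  simp +contextual only [ite_false, funext_iff, Set.disjoint_left.1 hPR]
  simp only [ite_zero_mul_ite_zero, mul_one]
  refine if_congr ⟨fun ⟨hl, hs⟩ => ⟨fun r hrP => ?_, fun r => ?_⟩,
    fun ⟨hl, hr⟩ => ⟨fun r hrP => ?_, fun r => ?_⟩⟩ rfl rfl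
  · by_cases hrR : r ∈ R
    · simpa [hrR] using hs r
    · simpa [hrR] using hl r hrP
  · by_cases hrR : r ∈ R
    · simpa [hrR] using hl r (hRP r hrR)
    · simpa [hrR] using hs r
  · split_ifs with hrR
    exacts [hr r, hl r hrP]
  · split_ifs with hrR
    exacts [hl r (hRP r hrR), hr r]

end SwapCopies

namespace LatticeFlow

variable {d : ℕ} {G : Type} [Group G] {u : G → Matrix (Fin d) (Fin d) ℂ} (Φ : LatticeFlow d G u)

section Conj

variable {Λ' : Type} [Fintype Λ'] [DecidableEq Λ'] {A B : Set Λ'}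

lemma omega_conj {V W : Matrix (Λ' → Fin d) (Λ' → Fin d) ℂ}
    (hW : IsUnitaryMat W) (hWG : IsGSymm u W) (hV : IsUnitaryMat V) (hVG : IsGSymm u V)
    (hVA : SupportedOn A V ∨ SupportedOn Aᶜ V) (hVB : SupportedOn B V ∨ SupportedOn Bᶜ V) :
    Φ.omega Λ' A B (V * W * Vᴴ) = Φ.omega Λ' A B W := by
  have hVB' : SupportedOn B Vᴴ ∨ SupportedOn Bᶜ Vᴴ := hVB.imp (·.conjTranspose) (·.conjTranspose)
  rw [Matrix.mul_assoc, Φ.left_inv Λ' A B _ V (hW.mul hV.conjTranspose)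
      (hWG.mul (hVG.conjTranspose hV)) hV hVG hVA,
    Φ.right_inv Λ' A B W _ hW hWG hV.conjTranspose (hVG.conjTranspose hV) hVB']

lemma omega_submatrix_swap {a b : Λ'} (hA : a ∈ A ↔ b ∈ A) (hB : a ∈ B ↔ b ∈ B)
    {W : Matrix (Λ' → Fin d) (Λ' → Fin d) ℂ} (hW : IsUnitaryMat W) (hWG : IsGSymm u W) :
    Φ.omega Λ' A B (W.submatrix (configPerm d (Equiv.swap a b))
      (configPerm d (Equiv.swap a b))) = Φ.omega Λ' A B W := by
  rw [← permMatrix_mul_mul_conjTranspose]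
  exact Φ.omega_conj hW hWG (isUnitaryMat_permMatrix _) (isGSymm_permMatrix_configPerm _)
    (supportedOn_or_compl_permMatrix_configPerm_swap A hA)
    (supportedOn_or_compl_permMatrix_configPerm_swap B hB)

end Conj

variable {Λ : Type} [Fintype Λ] [DecidableEq Λ]

lemma omega_submatrix_swapCopies {A B : Set (Λ ⊕ Λ)} (R : Set Λ)
    (hA : ∀ r ∈ R, (.inl r ∈ A ↔ .inr r ∈ A)) (hB : ∀ r ∈ R, (.inl r ∈ B ↔ .inr r ∈ B))
    {W : Matrix ((Λ ⊕ Λ) → Fin d) ((Λ ⊕ Λ) → Fin d) ℂ} (hW : IsUnitaryMat W)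
    (hWG : IsGSymm u W) :
    Φ.omega (Λ ⊕ Λ) A B (W.submatrix (configPerm d (swapCopies R))
      (configPerm d (swapCopies R))) = Φ.omega (Λ ⊕ Λ) A B W := by
  induction R, R.toFinite using Set.Finite.induction_on generalizing W with
  | empty => rw [swapCopies_empty]; rfl
  | @insert a R ha _ ih =>
    rw [swapCopies_insert ha, configPerm_mul, Equiv.Perm.coe_mul, ← submatrix_submatrix,
      ih (fun r hr => hA r (.inr hr)) (fun r hr => hB r (.inr hr)) (hW.submatrix _)
        (hWG.submatrix_configPerm _),
      Φ.omega_submatrix_swap (hA a (.inl rfl)) (hB a (.inl rfl)) hW hWG]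

lemma omega_stack_one (A B A' B' : Set Λ) {U : Matrix (Λ → Fin d) (Λ → Fin d) ℂ}
    (hU : IsUnitaryMat U) (hUG : IsGSymm u U) :
    Φ.omega (Λ ⊕ Λ) (.inl '' A ∪ .inr '' A') (.inl '' B ∪ .inr '' B') (stack U 1) =
      Φ.omega Λ A B U := by
  have h := Φ.stacking Λ Λ A B A' B' U 1 hU hUG isUnitaryMat_one isGSymm_one
  rwa [Φ.norm_one, add_zero] at h

lemma omega_one_stack (A B A' B' : Set Λ) {U : Matrix (Λ → Fin d) (Λ → Fin d) ℂ}
    (hU : IsUnitaryMat U) (hUG : IsGSymm u U) :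
    Φ.omega (Λ ⊕ Λ) (.inl '' A ∪ .inr '' A') (.inl '' B ∪ .inr '' B') (stack 1 U) =
      Φ.omega Λ A' B' U := by
  have h := Φ.stacking Λ Λ A B A' B' 1 U isUnitaryMat_one isGSymm_one hU hUG
  rwa [Φ.norm_one, zero_add] at h

lemma omega_mul_of_disjoint {Λ₁ Λ₂ : Set Λ} (hdisj : Disjoint Λ₁ Λ₂)
    {U₁ U₂ : Matrix (Λ → Fin d) (Λ → Fin d) ℂ}
    (hU₁ : IsUnitaryMat U₁) (hU₁G : IsGSymm u U₁) (hU₁s : SupportedOn Λ₁ U₁)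
    (hU₂ : IsUnitaryMat U₂) (hU₂G : IsGSymm u U₂) (hU₂s : SupportedOn Λ₂ U₂) (A B : Set Λ) :
    Φ.omega Λ A B (U₁ * U₂) = Φ.omega Λ A B U₁ + Φ.omega Λ A B U₂ := by
  have hswap : (stack (U₁ * U₂) 1).submatrix (configPerm d (swapCopies Λ₂))
      (configPerm d (swapCopies Λ₂)) = stack U₁ U₂ := by
    rw [← mul_one (1 : Matrix (Λ → Fin d) (Λ → Fin d) ℂ), ← stack_mul_stack,
      ← submatrix_mul_equiv _ _ _ (configPerm d (swapCopies Λ₂)),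
      stack_one_submatrix_swapCopies_of_disjoint hU₁s hdisj,
      stack_one_submatrix_swapCopies_of_supportedOn hU₂s, stack_mul_stack, mul_one, one_mul]
  calc Φ.omega Λ A B (U₁ * U₂)
      = Φ.omega (Λ ⊕ Λ) (.inl '' A ∪ .inr '' A) (.inl '' B ∪ .inr '' B) (stack (U₁ * U₂) 1) :=
        (Φ.omega_stack_one A B A B (hU₁.mul hU₂) (hU₁G.mul hU₂G)).symm
    _ = Φ.omega (Λ ⊕ Λ) (.inl '' A ∪ .inr '' A) (.inl '' B ∪ .inr '' B) (stack U₁ U₂) := by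
        rw [← hswap, Φ.omega_submatrix_swapCopies Λ₂ (by simp) (by simp)
          ((hU₁.mul hU₂).stack isUnitaryMat_one) ((hU₁G.mul hU₂G).stack isGSymm_one)]
    _ = Φ.omega Λ A B U₁ + Φ.omega Λ A B U₂ := Φ.stacking Λ Λ A B A B U₁ U₂ hU₁ hU₁G hU₂ hU₂G

lemma omega_inter_of_supportedOn {S : Set Λ} {U : Matrix (Λ → Fin d) (Λ → Fin d) ℂ}
    (hU : IsUnitaryMat U) (hUG : IsGSymm u U) (hUs : SupportedOn S U) (A B : Set Λ) :
    Φ.omega Λ A B U = Φ.omega Λ (A ∩ S) (B ∩ S) U := by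
  calc Φ.omega Λ A B U
      = Φ.omega (Λ ⊕ Λ) (.inl '' A ∪ .inr '' (A ∩ S)) (.inl '' B ∪ .inr '' (B ∩ S))
          (stack U 1) := (Φ.omega_stack_one _ _ _ _ hU hUG).symm
    _ = Φ.omega (Λ ⊕ Λ) (.inl '' A ∪ .inr '' (A ∩ S)) (.inl '' B ∪ .inr '' (B ∩ S))
          (stack 1 U) := by
        rw [← stack_one_submatrix_swapCopies_of_supportedOn hUs, Φ.omega_submatrix_swapCopies S
          (fun r hr => by simp [hr]) (fun r hr => by simp [hr]) (hU.stack isUnitaryMat_one)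
          (hUG.stack isGSymm_one)]
    _ = Φ.omega Λ (A ∩ S) (B ∩ S) U := Φ.omega_one_stack _ _ _ _ hU hUG

end LatticeFlow

section Cuts

variable {α : Type*} {A₁ A₂ Λ₁ Λ₂ : Set α}

lemma union_inter_eq_left_of_disjoint (hdisj : Disjoint Λ₁ Λ₂) (hA₁ : A₁ ⊆ Λ₁)
    (hA₂ : A₂ ⊆ Λ₂) : (A₁ ∪ A₂) ∩ Λ₁ = A₁ := by
  rw [Set.union_inter_distrib_right, Set.inter_eq_left.2 hA₁,
    (hdisj.mono_right hA₂).symm.inter_eq, Set.union_empty]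

lemma union_inter_eq_right_of_disjoint (hdisj : Disjoint Λ₁ Λ₂) (hA₁ : A₁ ⊆ Λ₁)
    (hA₂ : A₂ ⊆ Λ₂) : (A₁ ∪ A₂) ∩ Λ₂ = A₂ := by
  rw [Set.union_inter_distrib_right, Set.inter_eq_left.2 hA₂,
    (hdisj.mono_left hA₁).inter_eq, Set.empty_union]

end Cuts

theorem flow_generalized_stacking_general
    {d : ℕ} {G : Type} [Group G]
    (u : G → Matrix (Fin d) (Fin d) ℂ)
    (Φ : LatticeFlow d G u)
    (Λ : Type) [Fintype Λ] [DecidableEq Λ]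
    (Λ₁ Λ₂ : Set Λ) (hdisj : Disjoint Λ₁ Λ₂)
    (U₁ U₂ : Matrix (Λ → Fin d) (Λ → Fin d) ℂ)
    (hU₁ : IsUnitaryMat U₁) (hU₁G : IsGSymm u U₁) (hU₁s : SupportedOn Λ₁ U₁)
    (hU₂ : IsUnitaryMat U₂) (hU₂G : IsGSymm u U₂) (hU₂s : SupportedOn Λ₂ U₂)
    (A₁ B₁ A₂ B₂ : Set Λ)
    (hA₁ : A₁ ⊆ Λ₁) (hB₁ : B₁ ⊆ Λ₁) (hA₂ : A₂ ⊆ Λ₂) (hB₂ : B₂ ⊆ Λ₂) :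
    Φ.omega Λ (A₁ ∪ A₂) (B₁ ∪ B₂) (U₁ * U₂) =
      Φ.omega Λ A₁ B₁ U₁ + Φ.omega Λ A₂ B₂ U₂ := by
  rw [Φ.omega_mul_of_disjoint hdisj hU₁ hU₁G hU₁s hU₂ hU₂G hU₂s,
    Φ.omega_inter_of_supportedOn hU₁ hU₁G hU₁s, Φ.omega_inter_of_supportedOn hU₂ hU₂G hU₂s,
    union_inter_eq_left_of_disjoint hdisj hA₁ hA₂, union_inter_eq_left_of_disjoint hdisj hB₁ hB₂,
    union_inter_eq_right_of_disjoint hdisj hA₁ hA₂, union_inter_eq_right_of_disjoint hdisj hB₁ hB₂]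

/-- Lemma 1 (generalized stacking): for `G`-symmetric unitaries `U₁, U₂` supported on
disjoint subsets `Λ₁, Λ₂` of a lattice `Λ`, and `A₁, B₁ ⊆ Λ₁`, `A₂, B₂ ⊆ Λ₂`,
`Ω_{A₁∪A₂,B₁∪B₂}(U₁·U₂) = Ω_{A₁,B₁}(U₁) + Ω_{A₂,B₂}(U₂)`. -/
theorem flow_generalized_stacking
    {d : ℕ} (hd : 1 ≤ d) {G : Type} [Group G]
    (u : G → Matrix (Fin d) (Fin d) ℂ)
    (hu_unit : ∀ g, IsUnitaryMat (u g))
    (hu_mul : ∀ g h, u (g * h) = u g * u h)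
    (Φ : LatticeFlow d G u)
    (Λ : Type) [Fintype Λ] [DecidableEq Λ]
    (Λ₁ Λ₂ : Set Λ) (hdisj : Disjoint Λ₁ Λ₂)
    (U₁ U₂ : Matrix (Λ → Fin d) (Λ → Fin d) ℂ)
    (hU₁ : IsUnitaryMat U₁) (hU₁G : IsGSymm u U₁) (hU₁s : SupportedOn Λ₁ U₁)
    (hU₂ : IsUnitaryMat U₂) (hU₂G : IsGSymm u U₂) (hU₂s : SupportedOn Λ₂ U₂)
    (A₁ B₁ A₂ B₂ : Set Λ)
    (hA₁ : A₁ ⊆ Λ₁) (hB₁ : B₁ ⊆ Λ₁) (hA₂ : A₂ ⊆ Λ₂) (hB₂ : B₂ ⊆ Λ₂) :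
    Φ.omega Λ (A₁ ∪ A₂) (B₁ ∪ B₂) (U₁ * U₂) =
      Φ.omega Λ A₁ B₁ U₁ + Φ.omega Λ A₂ B₂ U₂ :=
  flow_generalized_stacking_general u Φ Λ Λ₁ Λ₂ hdisj U₁ U₂ hU₁ hU₁G hU₁s hU₂ hU₂G hU₂s A₁ B₁ A₂ B₂
    hA₁ hB₁ hA₂ hB₂
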